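/- (Medium gap case.) Assume μ_1 ≥ μ_2 and condition on the intersection W of the four good events W1–W4 of the three-level policy. If the gap Δ = μ_1 − μ_2 satisfies 4·Σ_{a∈{1,2}} √(log(T)/(σ·q_a·T1)) ≤ Δ ≤ 4·Σ_{a∈{1,2}} √(log(T)/(q_a·T1)), then all agents in the third level pull arm 1. -/

import Mathlib

open MeasureTheory ProbabilityTheory

noncomputable section

namespace IncExp

/-- Number of pulls of arm `a` among the rounds in `S`. -/
def pullCount {Ω : Type} {K : ℕ} (A : ℕ → Ω → Fin K) (S : Finset ℕ) (a : Fin K) (ω : Ω) : ℕ :=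
  (S.filter fun s => A s ω = a).card

/-- Empirical mean reward of arm `a` among the rounds in `S`. -/
def empMean {Ω : Type} {K : ℕ} (A : ℕ → Ω → Fin K) (r : ℕ → Ω → ℝ)
    (S : Finset ℕ) (a : Fin K) (ω : Ω) : ℝ :=
  (∑ s ∈ S.filter (fun s => A s ω = a), r s ω) / (pullCount A S a ω : ℝ)

/-- Index of round `t` among the pulls of arm `a` within the rounds `S`:
the number of pulls of `a` in `S` strictly before round `t`. -/
def idxIn {Ω : Type} {K : ℕ} (A : ℕ → Ω → Fin K) (S : Finset ℕ) (a : Fin K) (ω : Ω) (t : ℕ) : ℕ :=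
  pullCount A (S.filter fun s => s < t) a ω

/-- The rounds of `S` carrying the `m`-th (inclusive) through `n`-th (exclusive)
pulls of arm `a` within `S`. -/
def window {Ω : Type} {K : ℕ} (A : ℕ → Ω → Fin K) (S : Finset ℕ) (a : Fin K) (ω : Ω)
    (m n : ℕ) : Finset ℕ :=
  S.filter fun t => A t ω = a ∧ m ≤ idxIn A S a ω t ∧ idxIn A S a ω t < n

/-- The rounds of `S` carrying the first `n` pulls of arm `a` within `S`. -/
def firstPulls {Ω : Type} {K : ℕ} (A : ℕ → Ω → Fin K) (S : Finset ℕ) (a : Fin K) (ω : Ω)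
    (n : ℕ) : Finset ℕ :=
  window A S a ω 0 n

/-- Average reward over a set `W` of rounds. -/
def meanOver {Ω : Type} (r : ℕ → Ω → ℝ) (W : Finset ℕ) (ω : Ω) : ℝ :=
  (∑ t ∈ W, r t ω) / (W.card : ℝ)

/-- An execution of the social-learning bandit process with `K` arms, `T` rounds,
an order-based disclosure policy given by the observation sets `obs`, and agents
responding according to Assumption 1 (with constants `Nest` and `C_est = 1/16`).
Rewards are Bernoulli, read off an i.i.d. reward tape. -/
structure Execution (Ω : Type) [MeasureSpace Ω] (K T Nest : ℕ) where
  /-- the mean rewards -/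
  μ : Fin K → ℝ
  μ_mem : ∀ a, μ a ∈ Set.Icc (1/3 : ℝ) (2/3 : ℝ)
  /-- the subset of past rounds disclosed to agent `t` (fixed in advance) -/
  obs : ℕ → Finset ℕ
  obs_lt : ∀ t, ∀ s ∈ obs t, s < t
  /-- the arm pulled by agent `t` -/
  A : ℕ → Ω → Fin K
  A_meas : ∀ t, Measurable (A t)
  /-- the reward collected at round `t` -/
  r : ℕ → Ω → ℝ
  /-- the reward tape: cell `(a, j)` is the reward of the `j`-th pull of arm `a` -/
  tape : Fin K → ℕ → Ω → ℝ
  tape_meas : ∀ a j, Measurable (tape a j)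
  tape01 : ∀ a j ω, tape a j ω = 0 ∨ tape a j ω = 1
  tape_dist : ∀ a j, volume {ω | tape a j ω = 1} = ENNReal.ofReal (μ a)
  tape_indep : iIndepFun (m := fun _ => inferInstance)
    (fun p : Fin K × ℕ => fun ω => tape p.1 p.2 ω) volume
  r_eq : ∀ t ω, r t ω = tape (A t ω) (pullCount A (Finset.range t) (A t ω) ω) ω
  /-- the reward estimates formed by agent `t` -/
  est : ℕ → Fin K → Ω → ℝ
  est_close : ∀ t a ω, Nest ≤ pullCount A (obs t) a ω →
      |est t a ω - empMean A r (obs t) a ω| < (1/16 : ℝ) / Real.sqrt (pullCount A (obs t) a ω)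
  est_zero : ∀ t a ω, pullCount A (obs t) a ω = 0 → (1/3 : ℝ) ≤ est t a ω
  /-- each agent pulls an arm maximizing its estimate -/
  A_max : ∀ t ω a, est t a ω ≤ est t (A t ω) ω

/-- Regret of an execution. -/
def regret {Ω : Type} [MeasureSpace Ω] {K T Nest : ℕ} (e : Execution Ω K T Nest) : ℝ :=
  (T : ℝ) * (⨆ a, e.μ a) - ∑ t ∈ Finset.range T, ∫ ω, e.μ (e.A t ω)

/-- `S` is a full-disclosure path: every agent in `S` observes exactly the full
history of the preceding rounds of `S`. -/
def IsFDPath (obs : ℕ → Finset ℕ) (S : Finset ℕ) : Prop :=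
  ∀ t ∈ S, obs t = S.filter fun s => s < t

/-- The `s`-th first-level group of the three-level policy: `T1` full-disclosure
paths of `Lfdp` rounds each. -/
def grp (T1 Lfdp s : ℕ) : Finset ℕ :=
  Finset.Ico (s * T1 * Lfdp) ((s + 1) * T1 * Lfdp)

/-- The three-level policy with parameters `σ, T1, T2, Lfdp`:
level 1 consists of `σ` groups of `T1` full-disclosure paths of length `Lfdp` each;
level 2 consists of `σ` groups of `T2` agents, each agent of the `s`-th second-level
group observing exactly the history of the `s`-th first-level group;
every agent of level 3 (all remaining rounds) observes exactly the full history of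
the first two levels. -/
def ThreeLevel (obs : ℕ → Finset ℕ) (σ T1 T2 Lfdp : ℕ) : Prop :=
  (∀ j < σ * T1, IsFDPath obs (Finset.Ico (j * Lfdp) ((j + 1) * Lfdp))) ∧
  (∀ s < σ, ∀ t ∈ Finset.Ico (σ * T1 * Lfdp + s * T2) (σ * T1 * Lfdp + (s + 1) * T2),
      obs t = grp T1 Lfdp s) ∧
  (∀ t, σ * T1 * Lfdp + σ * T2 ≤ t → obs t = Finset.range (σ * T1 * Lfdp + σ * T2))

/-- The parameter `σ = 2^10 * log T` of the three-level policy. -/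
def sigT (T : ℕ) : ℕ := ⌈(2:ℝ)^(10:ℕ) * Real.log T⌉₊

/-- The parameter `T1 = T^(4/7) * (log T)^(-1/7)` of the three-level policy. -/
def T1of (T : ℕ) : ℕ := ⌈(T : ℝ) ^ ((4:ℝ)/7) * (Real.log T) ^ (-(1:ℝ)/7)⌉₊

/-- The parameter `T2 = T^(6/7) * (log T)^(-5/7)` of the three-level policy. -/
def T2of (T : ℕ) : ℕ := ⌈(T : ℝ) ^ ((6:ℝ)/7) * (Real.log T) ^ (-(5:ℝ)/7)⌉₊

/-!
A third-level agent sees the whole history of the first two levels. On W1 every first-level group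
holds at least `q a * T1 / 2` pulls of arm `a` (the deviation `Lfdp * √(T1 log T)` is a lower-order
term), so the agent sees at least `σ q a T1 / 2` samples of each arm. On W4 the empirical mean of
these samples is within `2 √(log T / (σ q a T1))` of `μ a`, and Assumption 1 adds at most
`√(log T / (σ q a T1))` more, so the estimates are within three times that of the means. The lower
bound on `Δ` then forces the estimate of arm 1 above that of arm 2.
-/

lemma pullCount_mono {Ω : Type} {K : ℕ} (A : ℕ → Ω → Fin K) {S S' : Finset ℕ} (h : S ⊆ S')
    (a : Fin K) (ω : Ω) : pullCount A S a ω ≤ pullCount A S' a ω :=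
  Finset.card_le_card (Finset.filter_subset_filter _ h)

lemma pullCount_Ico_add {Ω : Type} {K : ℕ} (A : ℕ → Ω → Fin K) (a : Fin K) (ω : Ω)
    {m n k : ℕ} (hmn : m ≤ n) (hnk : n ≤ k) :
    pullCount A (Finset.Ico m k) a ω
      = pullCount A (Finset.Ico m n) a ω + pullCount A (Finset.Ico n k) a ω := by
  unfold pullCount
  rw [← Finset.Ico_union_Ico_eq_Ico hmn hnk, Finset.filter_union,
    Finset.card_union_of_disjoint
      (Finset.disjoint_filter_filter (Finset.Ico_disjoint_Ico_consecutive m n k))]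

lemma sum_pullCount_grp {Ω : Type} {K : ℕ} (A : ℕ → Ω → Fin K) (a : Fin K) (ω : Ω)
    (T1 Lfdp σ : ℕ) :
    ∑ s ∈ Finset.range σ, pullCount A (grp T1 Lfdp s) a ω
      = pullCount A (Finset.range (σ * T1 * Lfdp)) a ω := by
  induction σ with
  | zero => simp [pullCount]
  | succ n ih =>
    rw [Finset.sum_range_succ, ih, Finset.range_eq_Ico, Finset.range_eq_Ico,
      pullCount_Ico_add A a ω (n := n * T1 * Lfdp) (k := (n + 1) * T1 * Lfdp)
        (Nat.zero_le _) (by gcongr; omega)]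
    rfl

lemma mul_le_pullCount_range_of_forall_grp {Ω : Type} {K : ℕ} {A : ℕ → Ω → Fin K}
    {a : Fin K} {ω : Ω} {T1 Lfdp σ : ℕ} {c : ℝ}
    (h : ∀ s < σ, c ≤ pullCount A (grp T1 Lfdp s) a ω) (m : ℕ) :
    σ * c ≤ pullCount A (Finset.range (σ * T1 * Lfdp + m)) a ω :=
  calc σ * c = ∑ _s ∈ Finset.range σ, c := by simp
    _ ≤ ∑ s ∈ Finset.range σ, (pullCount A (grp T1 Lfdp s) a ω : ℝ) :=
        Finset.sum_le_sum fun s hs => h s (Finset.mem_range.1 hs)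
    _ = pullCount A (Finset.range (σ * T1 * Lfdp)) a ω := by
        rw [← sum_pullCount_grp]; push_cast; rfl
    _ ≤ pullCount A (Finset.range (σ * T1 * Lfdp + m)) a ω := by
        exact_mod_cast pullCount_mono A (Finset.range_subset_range.2 (Nat.le_add_right _ _)) a ω

lemma half_le_of_abs_sub_le_mul_sqrt {n c x L ℓ : ℝ} (hc : 0 < c) (hx : 0 ≤ x) (hL : 0 ≤ L)
    (hxℓ : (2 * L / c) ^ 2 * ℓ ≤ x) (h : |n - c * x| ≤ L * Real.sqrt (x * ℓ)) :
    c * x / 2 ≤ n := by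
  have hLℓ : L * Real.sqrt (x * ℓ) ≤ c * x / 2 := by
    rw [← Real.sqrt_sq hL, ← Real.sqrt_mul (sq_nonneg L),
      ← Real.sqrt_sq (by positivity : 0 ≤ c * x / 2)]
    refine Real.sqrt_le_sqrt ?_
    have := mul_le_mul_of_nonneg_left hxℓ (by positivity : 0 ≤ c ^ 2 * x / 4)
    rw [div_pow] at this
    field_simp at this ⊢
    nlinarith
  linarith [(abs_le.1 h).1]

/-- The threshold `1 / 128 = 2 · (1/16)²` is what bounds the error `1 / (16 √N)` of Assumption 1
by `√(ℓ / D)`. -/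
lemma abs_sub_lt_three_sqrt {x m μ N D ℓ : ℝ} (hD : 0 < D) (hN : D / 2 ≤ N) (hℓ : 1 / 128 ≤ ℓ)
    (hx : |x - m| < 1 / 16 / Real.sqrt N) (hm : |m - μ| ≤ Real.sqrt (2 * ℓ / N)) :
    |x - μ| < 3 * Real.sqrt (ℓ / D) := by
  have hN0 : 0 < N := by linarith
  have hstat : Real.sqrt (2 * ℓ / N) ≤ 2 * Real.sqrt (ℓ / D) :=
    calc Real.sqrt (2 * ℓ / N) ≤ Real.sqrt (2 ^ 2 * (ℓ / D)) := by
          refine Real.sqrt_le_sqrt ?_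
          rw [div_le_iff₀ hN0]
          field_simp
          nlinarith
      _ = 2 * Real.sqrt (ℓ / D) := by rw [Real.sqrt_mul' _ (by positivity), Real.sqrt_sq two_pos.le]
  have hest : 1 / 16 / Real.sqrt N ≤ Real.sqrt (ℓ / D) := by
    refine Real.le_sqrt_of_sq_le ?_
    rw [div_pow, Real.sq_sqrt hN0.le, le_div_iff₀ hD]
    field_simp
    nlinarith
  linarith [abs_sub_le x m μ]

lemma eventually_mul_log_le_T1of (K : ℝ) :
    ∀ᶠ T : ℕ in Filter.atTop, K * Real.log T ≤ T1of T := by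
  set K' := max K 1
  have hK' : 0 < K' := lt_of_lt_of_le one_pos (le_max_right _ _)
  have hlo := (isLittleO_log_rpow_rpow_atTop ((8:ℝ)/7)
      (show (0:ℝ) < 4/7 by norm_num)).def (inv_pos.2 hK')
  have hreal : ∀ᶠ x : ℝ in Filter.atTop,
      K * Real.log x ≤ x ^ ((4:ℝ)/7) * Real.log x ^ (-(1:ℝ)/7) := by
    filter_upwards [hlo, Real.tendsto_log_atTop.eventually_gt_atTop 0,
      Filter.eventually_gt_atTop 0] with x hx hlog hx0
    rw [Real.norm_of_nonneg (by positivity), Real.norm_of_nonneg (by positivity)] at hx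
    have hsplit : Real.log x = Real.log x ^ ((8:ℝ)/7) * Real.log x ^ (-(1:ℝ)/7) := by
      rw [← Real.rpow_add hlog]; norm_num
    calc K * Real.log x ≤ K' * Real.log x := by gcongr; exact le_max_left _ _
      _ = K' * Real.log x ^ ((8:ℝ)/7) * Real.log x ^ (-(1:ℝ)/7) := by rw [mul_assoc, ← hsplit]
      _ ≤ K' * (K'⁻¹ * x ^ ((4:ℝ)/7)) * Real.log x ^ (-(1:ℝ)/7) := by gcongr
      _ = x ^ ((4:ℝ)/7) * Real.log x ^ (-(1:ℝ)/7) := by field_simp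
  filter_upwards [tendsto_natCast_atTop_atTop.eventually hreal] with T hT
  exact hT.trans (Nat.le_ceil _)

lemma one_le_sigT {T : ℕ} (hT : 0 < Real.log T) : 1 ≤ sigT T :=
  Nat.one_le_ceil_iff.2 (by positivity)

lemma Execution.A_ne_of_est_lt {Ω : Type} [MeasureSpace Ω] {K T Nest : ℕ}
    (e : Execution Ω K T Nest) {t : ℕ} {ω : Ω} {a b : Fin K}
    (h : e.est t b ω < e.est t a ω) : e.A t ω ≠ b := by
  rintro hb
  exact (e.A_max t ω a).not_gt (hb ▸ h)

lemma Execution.sum_filter_r_eq_sum_tape {Ω : Type} [MeasureSpace Ω] {K T Nest : ℕ}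
    (e : Execution Ω K T Nest) (a : Fin K) (ω : Ω) (N : ℕ) :
    ∑ t ∈ (Finset.range N).filter (fun t => e.A t ω = a), e.r t ω
      = ∑ j ∈ Finset.range (pullCount e.A (Finset.range N) a ω), e.tape a j ω := by
  induction N with
  | zero => simp [pullCount]
  | succ N ih =>
    by_cases h : e.A N ω = a
    · simp only [pullCount, Finset.range_add_one, Finset.filter_insert, if_pos h]
      rw [Finset.sum_insert (by simp), Finset.card_insert_of_notMem (by simp),
        Finset.sum_range_succ, ih, e.r_eq, h, add_comm]
      rfl
    · simpa [pullCount, Finset.range_add_one, Finset.filter_insert, h] using ih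

lemma Execution.abs_est_sub_μ_lt {Ω : Type} [MeasureSpace Ω] {K T Nest : ℕ}
    (e : Execution Ω K T Nest) {t P : ℕ} {a : Fin K} {ω : Ω} {D ℓ : ℝ}
    (hobs : e.obs t = Finset.range P) (hPT : P ≤ T) (hD : (Nest : ℝ) + 1 ≤ D / 2)
    (hN : D / 2 ≤ pullCount e.A (Finset.range P) a ω) (hℓ : 1 / 128 ≤ ℓ)
    (hW4 : ∀ τ : ℕ, 1 ≤ τ → τ ≤ pullCount e.A (Finset.range T) a ω →
      |(∑ j ∈ Finset.range τ, e.tape a j ω) / (τ : ℝ) - e.μ a| ≤ Real.sqrt (2 * ℓ / (τ : ℝ))) :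
    |e.est t a ω - e.μ a| < 3 * Real.sqrt (ℓ / D) := by
  set N := pullCount e.A (Finset.range P) a ω
  have hN1 : 1 ≤ N := by exact_mod_cast (by linarith : (1 : ℝ) ≤ N)
  have hNest : Nest ≤ N := by exact_mod_cast (by linarith : (Nest : ℝ) ≤ N)
  have hemp : empMean e.A e.r (e.obs t) a ω = (∑ j ∈ Finset.range N, e.tape a j ω) / N := by
    rw [hobs, empMean, e.sum_filter_r_eq_sum_tape]
  have hest := e.est_close t a ω (hobs ▸ hNest)
  rw [hemp, hobs] at hest
  exact abs_sub_lt_three_sqrt (by linarith) hN hℓ hest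
    (hW4 N hN1 (pullCount_mono e.A (Finset.range_subset_range.2 hPT) a ω))

/-- medium gap: assume `μ₁ ≥ μ₂` and condition on the good events
`W1–W4` of the three-level policy.  If the gap satisfies
`4·Σ_a √(log T / (σ · q a · T1)) ≤ Δ ≤ 4·Σ_a √(log T / (q a · T1))` then all
agents in the third level pull arm 1 (the best arm, index `0`). -/
theorem medium_gap (Nest Lfdp : ℕ) (q : Fin 2 → ℝ) (hq0 : ∀ a, 0 < q a) :
    ∃ T0 : ℕ, ∀ T : ℕ, T0 ≤ T →
    ∀ (Ω : Type) [MeasureSpace Ω] [IsProbabilityMeasure (volume : Measure Ω)],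
    ∀ e : Execution Ω 2 T Nest,
      -- arm 1 (index 0) is the best arm
      e.μ 1 ≤ e.μ 0 →
      ThreeLevel e.obs (sigT T) (T1of T) (T2of T) Lfdp →
      (∀ (a : Fin 2) (j : ℕ), j < sigT T * T1of T →
        ∫ ω, (pullCount e.A (Finset.Ico (j * Lfdp) ((j + 1) * Lfdp)) a ω : ℝ) = q a) →
    ∀ gtape : ℕ → Fin 2 → ℕ → Ω → ℝ,
      (∀ s < sigT T, ∀ (ω : Ω), ∀ t ∈ grp (T1of T) Lfdp s,
        e.r t ω = gtape s (e.A t ω) (idxIn e.A (grp (T1of T) Lfdp s) (e.A t ω) ω t) ω) →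
    ∀ ω : Ω,
      -- event W1 at ω: concentration of per-group pull counts
      (∀ s < sigT T, ∀ a : Fin 2,
        |(pullCount e.A (grp (T1of T) Lfdp s) a ω : ℝ) - q a * T1of T|
          ≤ (Lfdp : ℝ) * Real.sqrt (T1of T * Real.log T)) →
      -- event W2 at ω: concentration of tape window averages in the first level
      (∀ s < sigT T, ∀ a : Fin 2, ∀ τ1 τ2 : ℕ, τ1 ≤ τ2 → τ2 < T →
        |(∑ j ∈ Finset.Icc τ1 τ2, gtape s a j ω) / ((τ2 - τ1 + 1 : ℕ) : ℝ) - e.μ a|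
          ≤ Real.sqrt (2 * Real.log T / ((τ2 - τ1 + 1 : ℕ) : ℝ))) →
      -- event W3 at ω: anti-concentration, each arm has a lucky first-level group
      (∀ a : Fin 2, ∃ s < sigT T,
        e.μ a + 1 / Real.sqrt (q a * T1of T) ≤
          (∑ j ∈ Finset.range ⌊q a * (T1of T : ℝ)⌋₊, gtape s a j ω) / (⌊q a * (T1of T : ℝ)⌋₊ : ℝ) ∧
        (∑ j ∈ Finset.range ⌊q (1 - a) * (T1of T : ℝ)⌋₊, gtape s (1 - a) j ω) /
            (⌊q (1 - a) * (T1of T : ℝ)⌋₊ : ℝ)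
          ≤ e.μ (1 - a) - 1 / Real.sqrt (q (1 - a) * T1of T)) →
      -- event W4 at ω: concentration of prefix empirical means over the whole run
      (∀ (a : Fin 2) (τ : ℕ), 1 ≤ τ → τ ≤ pullCount e.A (Finset.range T) a ω →
        |(∑ j ∈ Finset.range τ, e.tape a j ω) / (τ : ℝ) - e.μ a|
          ≤ Real.sqrt (2 * Real.log T / (τ : ℝ))) →
      -- medium gap
      4 * (Real.sqrt (Real.log T / (sigT T * (q 0 * T1of T)))
            + Real.sqrt (Real.log T / (sigT T * (q 1 * T1of T))))
          ≤ e.μ 0 - e.μ 1 →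
      e.μ 0 - e.μ 1
          ≤ 4 * (Real.sqrt (Real.log T / (q 0 * T1of T))
                  + Real.sqrt (Real.log T / (q 1 * T1of T))) →
      -- all agents of the third level pull arm 1
      ∀ t : ℕ, sigT T * T1of T * Lfdp + sigT T * T2of T ≤ t → t < T → e.A t ω = 0 := by
  obtain ⟨T0, hT0⟩ := Filter.eventually_atTop.1 <|
    (tendsto_natCast_atTop_atTop.eventually (Real.tendsto_log_atTop.eventually_ge_atTop 1)).and <|
      Filter.eventually_all.2 fun a =>
        (eventually_mul_log_le_T1of ((2 * Lfdp / q a) ^ 2)).and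
          (eventually_mul_log_le_T1of (2 * (Nest + 1) / q a))
  refine ⟨T0, fun T hT Ω _ _ e _ hTL _ _ _ ω hW1 _ _ hW4 hgap _ t ht htT => ?_⟩
  obtain ⟨hlog, hT1⟩ := hT0 T hT
  have hσ : (1 : ℝ) ≤ sigT T := by exact_mod_cast one_le_sigT (by linarith)
  have hD : ∀ a, (Nest : ℝ) + 1 ≤ sigT T * (q a * T1of T) / 2 := fun a => by
    have h := (le_mul_of_one_le_right (div_pos (by positivity) (hq0 a)).le hlog).trans (hT1 a).2
    rw [div_le_iff₀ (hq0 a)] at h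
    nlinarith [mul_nonneg (sub_nonneg.2 hσ) (mul_nonneg (hq0 a).le (Nat.cast_nonneg (T1of T)))]
  have hN : ∀ a, sigT T * (q a * T1of T) / 2
      ≤ pullCount e.A (Finset.range (sigT T * T1of T * Lfdp + sigT T * T2of T)) a ω := fun a => by
    rw [mul_div_assoc]
    exact mul_le_pullCount_range_of_forall_grp (fun s hs => half_le_of_abs_sub_le_mul_sqrt
      (hq0 a) (Nat.cast_nonneg _) (Nat.cast_nonneg _) (hT1 a).1 (hW1 s hs a)) _
  have hest : ∀ a,
      |e.est t a ω - e.μ a| < 3 * Real.sqrt (Real.log T / (sigT T * (q a * T1of T))) := fun a =>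
    e.abs_est_sub_μ_lt (hTL.2.2 t ht) (ht.trans htT.le) (hD a) (hN a) (by linarith) (hW4 a)
  by_contra h0
  refine e.A_ne_of_est_lt (a := 0) ?_ (Fin.eq_one_of_ne_zero _ h0)
  linarith [abs_lt.1 (hest 0), abs_lt.1 (hest 1),
    Real.sqrt_nonneg (Real.log T / (sigT T * (q 0 * T1of T))),
    Real.sqrt_nonneg (Real.log T / (sigT T * (q 1 * T1of T)))]

end IncExp
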